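/- For each pair (a, [S_min, S_max]) in the list (0.91, [0.99, 1.12]), (1.02, [1.12, 1.32]), (1.16, [1.32, 1.60]), (1.33, [1.59, 2.01]), (1.56, [2.00, 2.74]), (1.90, [2.73, 4.00]), (2.30, [4.00, ∞)), and for every g ∈ (0,1) and real L such that S_min ≤ L + a·g ≤ S_max, the starter S̃ = L + a·g is an approximate zero of f_{g,L}. -/

import Mathlib

/-!
Put `r = √(1 + z²)`. Then `f' = 1 - g / r` and `f⁽ᵏ⁾ = -g · arsinh⁽ᵏ⁾` for `k ≥ 2`. Writing
`arsinh' = (x + i)^(-1/2) (x - i)^(-1/2)` and differentiating the family `(x + i)^p (x - i)^q` term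
by term gives `|arsinh⁽ᵏ⁾ z| ≤ (k - 1)! / r^k`, hence `γ ≤ max (g / (2 (r - g))) 1 / r`. At the
starter `z = L + a g` we have `f z = g (a - arsinh z)`, so
`α ≤ g |a - arsinh z| max (g / (2 (r - g))) 1 / (r - g)`, which increases with `g`. On each bounded
row of the table this is pushed below `0.17 < α₀` by rational enclosures of `arsinh` at the
endpoints; on `[4, ∞)` the bound `arsinh z ≤ 2.05 + z / 10` suffices.
-/

noncomputable section

/-- The hyperbolic Kepler function `f_{g,L}(S) = S - g·arcsinh(S) - L`. -/
def fhk (g L : ℝ) : ℝ → ℝ := fun S => S - g * Real.arsinh S - L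

/-- `β(f,z) = |f(z)/f'(z)|`. -/
def betaFn (f : ℝ → ℝ) (z : ℝ) : ℝ := |f z / deriv f z|

/-- `γ(f,z) = sup_{k ≥ 2} |f^{(k)}(z)/(k!·f'(z))|^{1/(k-1)}`. -/
def gammaFn (f : ℝ → ℝ) (z : ℝ) : ℝ :=
  sSup {y : ℝ | ∃ k : ℕ, 2 ≤ k ∧
    y = |iteratedDeriv k f z / (Nat.factorial k * deriv f z)| ^ ((1 : ℝ) / ((k : ℝ) - 1))}

/-- `α(f,z) = β(f,z)·γ(f,z)`. -/
def alphaFn (f : ℝ → ℝ) (z : ℝ) : ℝ := betaFn f z * gammaFn f z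

/-- Smale's constant (improved by Wang–Han): `α₀ = 3 - 2√2`. -/
def alpha0 : ℝ := 3 - 2 * Real.sqrt 2

/-- `z` is an approximate zero of `f` when `α(f,z) < α₀`. -/
def ApproxZero (f : ℝ → ℝ) (z : ℝ) : Prop := alphaFn f z < alpha0

open Real Nat

section PowPair

open Complex

def powPair (p q : ℝ) (x : ℝ) : ℂ := ((x : ℂ) + I) ^ (p : ℂ) * ((x : ℂ) - I) ^ (q : ℂ)

lemma ofReal_add_I_mem_slitPlane (x : ℝ) : (x : ℂ) + I ∈ slitPlane :=
  mem_slitPlane_iff.2 (Or.inr (by simp))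

lemma ofReal_sub_I_mem_slitPlane (x : ℝ) : (x : ℂ) - I ∈ slitPlane :=
  mem_slitPlane_iff.2 (Or.inr (by simp))

lemma norm_ofReal_add_I (x : ℝ) : ‖(x : ℂ) + I‖ = √(1 + x ^ 2) := by
  rw [norm_def, normSq_apply]
  simp only [add_re, ofReal_re, I_re, add_zero, add_im, ofReal_im, I_im, zero_add, mul_one]
  ring_nf

lemma norm_ofReal_sub_I (x : ℝ) : ‖(x : ℂ) - I‖ = √(1 + x ^ 2) := by
  rw [norm_def, normSq_apply]
  simp only [sub_re, ofReal_re, I_re, sub_zero, sub_im, ofReal_im, I_im, zero_sub, mul_neg,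
    mul_one, neg_neg]
  ring_nf

lemma norm_powPair (p q x : ℝ) : ‖powPair p q x‖ = √(1 + x ^ 2) ^ (p + q) := by
  rw [powPair, norm_mul, norm_cpow_real, norm_cpow_real, norm_ofReal_add_I, norm_ofReal_sub_I,
    ← rpow_add (sqrt_pos.2 (by positivity))]

lemma hasDerivAt_powPair (p q x : ℝ) :
    HasDerivAt (powPair p q) (p • powPair (p - 1) q x + q • powPair p (q - 1) x) x := by
  have hp := (((hasDerivAt_id (x : ℂ)).add_const I).cpow_const
    (c := p) (ofReal_add_I_mem_slitPlane x)).comp_ofReal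
  have hq := (((hasDerivAt_id (x : ℂ)).sub_const I).cpow_const
    (c := q) (ofReal_sub_I_mem_slitPlane x)).comp_ofReal
  refine (hp.mul hq).congr_deriv ?_
  simp only [powPair, id, real_smul]
  push_cast
  ring

lemma deriv_powPair (p q : ℝ) :
    deriv (powPair p q) = fun x => p • powPair (p - 1) q x + q • powPair p (q - 1) x :=
  funext fun x => (hasDerivAt_powPair p q x).deriv

lemma contDiff_powPair (n : ℕ) : ∀ p q : ℝ, ContDiff ℝ n (powPair p q) := by
  induction n with
  | zero => exact fun p q => contDiff_zero.2 <| continuous_iff_continuousAt.2 fun x =>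
      (hasDerivAt_powPair p q x).continuousAt
  | succ n ih =>
    intro p q
    rw [Nat.cast_succ, contDiff_succ_iff_deriv, deriv_powPair]
    exact ⟨fun x => (hasDerivAt_powPair p q x).differentiableAt, by simp,
      ((ih (p - 1) q).const_smul p).add ((ih p (q - 1)).const_smul q)⟩

lemma norm_iteratedDeriv_powPair_le (n : ℕ) (x : ℝ) : ∀ p q : ℝ, p ≤ 0 → q ≤ 0 →
    ‖iteratedDeriv n (powPair p q) x‖
      ≤ (ascPochhammer ℝ n).eval (-(p + q)) * √(1 + x ^ 2) ^ (p + q - n) := by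
  induction n with
  | zero => intro p q _ _; simp [norm_powPair]
  | succ n ih =>
    intro p q hp hq
    have hcd : ∀ p q : ℝ, ContDiffAt ℝ n (powPair p q) x :=
      fun p q => (contDiff_powPair n p q).contDiffAt
    rw [iteratedDeriv_succ', deriv_powPair, iteratedDeriv_fun_add ((hcd _ _).const_smul p)
      ((hcd _ _).const_smul q), iteratedDeriv_fun_const_smul_field,
      iteratedDeriv_fun_const_smul_field]
    have hr : 0 < √(1 + x ^ 2) := sqrt_pos.2 (by positivity)
    calc _ ≤ |p| * ‖iteratedDeriv n (powPair (p - 1) q) x‖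
          + |q| * ‖iteratedDeriv n (powPair p (q - 1)) x‖ := by
          refine (norm_add_le _ _).trans ?_
          rw [norm_smul, norm_smul, Real.norm_eq_abs, Real.norm_eq_abs]
      _ ≤ |p| * ((ascPochhammer ℝ n).eval (-(p - 1 + q)) * √(1 + x ^ 2) ^ (p - 1 + q - n))
          + |q| * ((ascPochhammer ℝ n).eval (-(p + (q - 1)))
            * √(1 + x ^ 2) ^ (p + (q - 1) - n)) := by
          gcongr
          exacts [ih (p - 1) q (by linarith) hq, ih p (q - 1) hp (by linarith)]
      _ = _ := by
          rw [abs_of_nonpos hp, abs_of_nonpos hq, ascPochhammer_succ_left,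
            show -(p - 1 + q) = -(p + q) + 1 by ring, show -(p + (q - 1)) = -(p + q) + 1 by ring,
            show p - 1 + q - n = p + q - (n + 1 : ℕ) by push_cast; ring,
            show p + (q - 1) - n = p + q - (n + 1 : ℕ) by push_cast; ring]
          simp only [Polynomial.eval_mul, Polynomial.eval_X, Polynomial.eval_comp,
            Polynomial.eval_add, Polynomial.eval_one]
          ring

open ComplexConjugate in
lemma powPair_neg_half (x : ℝ) : powPair (-1 / 2) (-1 / 2) x = ((√(1 + x ^ 2))⁻¹ : ℝ) := by
  have hconj :
      ((x : ℂ) - I) ^ ((-1 / 2 : ℝ) : ℂ) = conj (((x : ℂ) + I) ^ ((-1 / 2 : ℝ) : ℂ)) := by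
    have h := cpow_conj ((x : ℂ) - I) ((-1 / 2 : ℝ) : ℂ) (by
      intro h; simpa using (arg_eq_pi_iff.1 h).2)
    rw [conj_ofReal] at h
    rw [h]
    congr 2
    simp [map_sub]
  have hsq : (√(1 + x ^ 2) ^ (-1 / 2 : ℝ)) ^ 2 = (√(1 + x ^ 2))⁻¹ := by
    rw [← rpow_natCast, ← rpow_mul (sqrt_nonneg _)]
    norm_num [rpow_neg_one]
  rw [powPair, hconj, mul_conj', norm_cpow_real, norm_ofReal_add_I, ← ofReal_pow, hsq]

lemma abs_iteratedDeriv_succ_arsinh_le (n : ℕ) (x : ℝ) :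
    |iteratedDeriv (n + 1) arsinh x| ≤ n ! / √(1 + x ^ 2) ^ (n + 1) := by
  have hderiv : deriv (fun y => (arsinh y : ℂ)) = powPair (-1 / 2) (-1 / 2) :=
    funext fun y => by rw [powPair_neg_half]; exact (hasDerivAt_arsinh y).ofReal_comp.deriv
  have hiso : ‖iteratedDeriv (n + 1) (fun y => (arsinh y : ℂ)) x‖
      = ‖iteratedDeriv (n + 1) arsinh x‖ := by
    rw [← norm_iteratedFDeriv_eq_norm_iteratedDeriv, ← norm_iteratedFDeriv_eq_norm_iteratedDeriv]
    exact ofRealLI.norm_iteratedFDeriv_comp_left contDiff_arsinh.contDiffAt le_rfl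
  have hr : 0 < √(1 + x ^ 2) := sqrt_pos.2 (by positivity)
  rw [← Real.norm_eq_abs, ← hiso, iteratedDeriv_succ', hderiv]
  refine (norm_iteratedDeriv_powPair_le n x _ _ (by norm_num) (by norm_num)).trans_eq ?_
  rw [show -(-1 / 2 + -1 / 2 : ℝ) = 1 by norm_num, ascPochhammer_eval_one,
    show (-1 / 2 + -1 / 2 - n : ℝ) = -((n + 1 : ℕ) : ℝ) by push_cast; ring, rpow_neg hr.le,
    rpow_natCast, div_eq_mul_inv]

end PowPair

lemma hasDerivAt_fhk (g L z : ℝ) : HasDerivAt (fhk g L) (1 - g * deriv arsinh z) z :=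
  ((hasDerivAt_id z).sub ((differentiable_arsinh z).hasDerivAt.const_mul g)).sub_const L

lemma deriv_fhk (g L z : ℝ) : deriv (fhk g L) z = 1 - g / √(1 + z ^ 2) := by
  rw [(hasDerivAt_fhk g L z).deriv, (hasDerivAt_arsinh z).deriv, div_eq_mul_inv]

lemma iteratedDeriv_fhk {k : ℕ} (hk : 2 ≤ k) (g L z : ℝ) :
    iteratedDeriv k (fhk g L) z = -(g * iteratedDeriv k arsinh z) := by
  obtain ⟨m, rfl⟩ : ∃ m, k = m + 1 := ⟨k - 1, by omega⟩
  rw [iteratedDeriv_succ', funext fun S => (hasDerivAt_fhk g L S).deriv,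
    iteratedDeriv_const_sub (by omega), iteratedDeriv_neg, iteratedDeriv_const_mul_field,
    ← iteratedDeriv_succ']

lemma gammaFn_le {f : ℝ → ℝ} {z c : ℝ} (hc : 0 ≤ c)
    (h : ∀ k ≥ 2, |iteratedDeriv k f z / (k ! * deriv f z)| ≤ c ^ (k - 1)) :
    gammaFn f z ≤ c := by
  refine Real.sSup_le ?_ hc
  rintro y ⟨k, hk, rfl⟩
  have hexp : (1 : ℝ) / (k - 1) = ((k - 1 : ℕ) : ℝ)⁻¹ := by
    rw [Nat.cast_sub (by omega), one_div, Nat.cast_one]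
  rw [hexp]
  calc _ ≤ (c ^ (k - 1)) ^ ((k - 1 : ℕ) : ℝ)⁻¹ := by gcongr; exact h k hk
    _ = c := pow_rpow_inv_natCast hc (by omega)

lemma one_le_sqrt_one_add_sq (z : ℝ) : 1 ≤ √(1 + z ^ 2) :=
  le_sqrt_of_sq_le (by nlinarith [sq_nonneg z])

lemma gammaFn_fhk_le {g : ℝ} (hg0 : 0 < g) (hg1 : g < 1) (L z : ℝ) :
    gammaFn (fhk g L) z ≤ max (g / (2 * (√(1 + z ^ 2) - g))) 1 / √(1 + z ^ 2) := by
  have hd : deriv (fhk g L) z = (√(1 + z ^ 2) - g) / √(1 + z ^ 2) := by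
    rw [deriv_fhk, sub_div, div_self (by positivity)]
  set r := √(1 + z ^ 2)
  set M := max (g / (2 * (r - g))) 1
  have hr : 1 ≤ r := one_le_sqrt_one_add_sq z
  have hrg : 0 < r - g := by linarith
  have hM : 1 ≤ M := le_max_right _ _
  refine gammaFn_le (by positivity) fun k hk => ?_
  obtain ⟨m, rfl⟩ : ∃ m, k = m + 2 := ⟨k - 2, by omega⟩
  have hder : |iteratedDeriv (m + 1 + 1) arsinh z| ≤ (m + 1) ! / r ^ (m + 2) :=
    abs_iteratedDeriv_succ_arsinh_le (m + 1) z
  have hfac : ((m + 2) ! : ℝ) = (m + 2) * (m + 1) ! := by push_cast [Nat.factorial_succ]; ring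
  have hk2 : g / ((m + 2) * (r - g)) ≤ M :=
    (div_le_div_of_nonneg_left hg0.le (by positivity) (by gcongr; linarith)).trans
      (le_max_left _ _)
  calc |iteratedDeriv (m + 2) (fhk g L) z / ((m + 2) ! * deriv (fhk g L) z)|
      = g * |iteratedDeriv (m + 1 + 1) arsinh z| * r / ((m + 2) ! * (r - g)) := by
        rw [iteratedDeriv_fhk hk, hd, abs_div, abs_neg, abs_mul, abs_of_pos hg0,
          abs_of_pos (mul_pos (by positivity) (div_pos hrg (by positivity)))]
        field_simp
    _ ≤ g * ((m + 1) ! / r ^ (m + 2)) * r / ((m + 2) ! * (r - g)) := by gcongr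
    _ = g / ((m + 2) * (r - g)) / r ^ (m + 1) := by
        rw [hfac]
        field_simp
        ring
    _ ≤ M ^ (m + 1) / r ^ (m + 1) := by gcongr; exact hk2.trans (le_self_pow₀ hM (by omega))
    _ = (M / r) ^ (m + 2 - 1) := by rw [div_pow]; rfl

lemma alphaFn_fhk_le {g : ℝ} (hg0 : 0 < g) (hg1 : g < 1) (L z : ℝ) :
    alphaFn (fhk g L) z
      ≤ |fhk g L z| * max (g / (2 * (√(1 + z ^ 2) - g))) 1 / (√(1 + z ^ 2) - g) := by
  have hr : 1 ≤ √(1 + z ^ 2) := one_le_sqrt_one_add_sq z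
  have hrg : 0 < √(1 + z ^ 2) - g := by linarith
  have hbeta : betaFn (fhk g L) z = |fhk g L z| * √(1 + z ^ 2) / (√(1 + z ^ 2) - g) := by
    have hd : 0 < 1 - g / √(1 + z ^ 2) := by rw [sub_pos, div_lt_one (by positivity)]; linarith
    rw [betaFn, deriv_fhk, abs_div, abs_of_pos hd]
    field_simp
  calc alphaFn (fhk g L) z
      ≤ betaFn (fhk g L) z * (max (g / (2 * (√(1 + z ^ 2) - g))) 1 / √(1 + z ^ 2)) :=
        mul_le_mul_of_nonneg_left (gammaFn_fhk_le hg0 hg1 L z) (abs_nonneg _)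
    _ = _ := by
        rw [hbeta]
        field_simp

lemma fhk_add_mul (g L a : ℝ) : fhk g L (L + a * g) = g * (a - arsinh (L + a * g)) := by
  simp only [fhk]
  ring

lemma alpha0_gt : (0.17 : ℝ) < alpha0 := by
  have h : √2 < 1.415 := (sqrt_lt' (by norm_num)).2 (by norm_num)
  rw [alpha0]
  linarith

lemma approxZero_fhk_of_abs_sub_arsinh_le {g L a D s : ℝ} (hg0 : 0 < g) (hg1 : g < 1)
    (hD : |a - arsinh (L + a * g)| ≤ D) (hs : 1 < s) (hsz : s ≤ √(1 + (L + a * g) ^ 2))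
    (hnum : D * max (1 / (2 * (s - 1))) 1 / (s - 1) ≤ 0.17) :
    ApproxZero (fhk g L) (L + a * g) := by
  set z := L + a * g
  have hsg : s - 1 ≤ √(1 + z ^ 2) - g := by linarith
  have hD0 : 0 ≤ D := (abs_nonneg _).trans hD
  have hM : max (g / (2 * (√(1 + z ^ 2) - g))) 1 ≤ max (1 / (2 * (s - 1))) 1 := by
    gcongr max ?_ 1
    exact div_le_div₀ zero_le_one hg1.le (by linarith) (by linarith)
  calc alphaFn (fhk g L) z
      ≤ |fhk g L z| * max (g / (2 * (√(1 + z ^ 2) - g))) 1 / (√(1 + z ^ 2) - g) :=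
        alphaFn_fhk_le hg0 hg1 L z
    _ = g * |a - arsinh z| * max (g / (2 * (√(1 + z ^ 2) - g))) 1 / (√(1 + z ^ 2) - g) := by
        rw [fhk_add_mul, abs_mul, abs_of_pos hg0]
    _ ≤ 1 * D * max (1 / (2 * (s - 1))) 1 / (s - 1) := by gcongr
    _ ≤ 0.17 := by rwa [one_mul]
    _ < alpha0 := alpha0_gt

def expTaylor (n : ℕ) (x : ℝ) : ℝ := ∑ m ∈ Finset.range n, x ^ m / m !

lemma expTaylor_pow_le_exp (n : ℕ) {k : ℕ} (hk : 0 < k) {x : ℝ} (hx : 0 ≤ x) :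
    expTaylor n (x / k) ^ k ≤ exp x := by
  calc expTaylor n (x / k) ^ k ≤ exp (x / k) ^ k := by
        gcongr
        · exact Finset.sum_nonneg fun m _ => by positivity
        · exact sum_le_exp_of_nonneg (by positivity) n
    _ = exp x := by rw [← exp_nat_mul, mul_div_cancel₀ _ (by positivity)]

lemma exp_le_expTaylor_pow {n k : ℕ} (hn : 0 < n) (hk : 0 < k) {x : ℝ} (h0 : 0 ≤ x)
    (hx : x ≤ k) :
    exp x ≤ (expTaylor n (x / k) + (x / k) ^ n * (n + 1) / (n ! * n)) ^ k := by
  calc exp x = exp (x / k) ^ k := by rw [← exp_nat_mul, mul_div_cancel₀ _ (by positivity)]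
    _ ≤ _ := by
        gcongr
        exact exp_bound' (by positivity) ((div_le_one (by positivity)).2 hx) hn

lemma le_arsinh_of_exp_le {u s ℓ : ℝ} (hsu : s ^ 2 ≤ 1 + u ^ 2)
    (h : exp ℓ ≤ u + s) : ℓ ≤ arsinh u := by
  rw [← exp_le_exp, exp_arsinh]
  linarith [le_sqrt_of_sq_le hsu]

lemma arsinh_le_of_le_exp {v t h : ℝ} (ht : 0 ≤ t) (hvt : 1 + v ^ 2 ≤ t ^ 2)
    (hexp : v + t ≤ exp h) : arsinh v ≤ h := by
  rw [← exp_le_exp, exp_arsinh]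
  linarith [sqrt_le_iff.2 ⟨ht, hvt⟩]

/-- Rational data certifying that the starter `L + a g` works whenever `u ≤ L + a g ≤ v`:
`s ≤ √(1 + u²)`, `√(1 + v²) ≤ t`, `lo ≤ arsinh u` and `arsinh v ≤ hi` (through Taylor enclosures
of `exp x = exp (x/4)^4`, with remainder `9 / (8! · 8) = 1/35840`), and the bound on `α` at
`g = 1`. -/
def StarterCertificate (a u v lo hi s t : ℝ) : Prop :=
  1 < s ∧ s ^ 2 ≤ 1 + u ^ 2 ∧ 0 ≤ t ∧ 1 + v ^ 2 ≤ t ^ 2 ∧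
    0 ≤ lo ∧ lo ≤ 4 ∧ (expTaylor 8 (lo / 4) + (lo / 4) ^ 8 / 35840) ^ 4 ≤ u + s ∧
    0 ≤ hi ∧ v + t ≤ expTaylor 8 (hi / 4) ^ 4 ∧
    max (a - lo) (hi - a) * max (1 / (2 * (s - 1))) 1 / (s - 1) ≤ 0.17

lemma exp_le_of_expTaylor {x y : ℝ} (h0 : 0 ≤ x) (h4 : x ≤ 4)
    (h : (expTaylor 8 (x / 4) + (x / 4) ^ 8 / 35840) ^ 4 ≤ y) : exp x ≤ y := by
  refine (exp_le_expTaylor_pow (n := 8) (k := 4) (by norm_num) (by norm_num) h0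
    (by exact_mod_cast h4)).trans (le_of_eq_of_le ?_ h)
  norm_num [Nat.factorial]
  ring

lemma le_exp_of_expTaylor {x y : ℝ} (h0 : 0 ≤ x) (h : y ≤ expTaylor 8 (x / 4) ^ 4) : y ≤ exp x :=
  h.trans (by exact_mod_cast expTaylor_pow_le_exp 8 (k := 4) (by norm_num) h0)

lemma StarterCertificate.approxZero {a u v lo hi s t g L : ℝ}
    (hc : StarterCertificate a u v lo hi s t) (hg0 : 0 < g) (hg1 : g < 1) :
    u ≤ L + a * g → L + a * g ≤ v → ApproxZero (fhk g L) (L + a * g) := by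
  obtain ⟨hs1, hsu, ht0, htv, hlo0, hlo4, hlo, hhi0, hhi, hnum⟩ := hc
  intro hu hv
  have hlo_u : lo ≤ arsinh u := le_arsinh_of_exp_le hsu (exp_le_of_expTaylor hlo0 hlo4 hlo)
  have hhi_v : arsinh v ≤ hi := arsinh_le_of_le_exp ht0 htv (le_exp_of_expTaylor hhi0 hhi)
  have hu0 : 0 ≤ u := arsinh_nonneg_iff.1 (hlo0.trans hlo_u)
  refine approxZero_fhk_of_abs_sub_arsinh_le hg0 hg1 (D := max (a - lo) (hi - a)) ?_ hs1
    (le_sqrt_of_sq_le (by nlinarith)) hnum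
  have := arsinh_le_arsinh.2 hu
  have := arsinh_le_arsinh.2 hv
  exact abs_le.2 ⟨by linarith [le_max_right (a - lo) (hi - a)],
    by linarith [le_max_left (a - lo) (hi - a)]⟩

lemma arsinh_le_add_div_ten {z : ℝ} (hz : 0 ≤ z) : arsinh z ≤ 2.05 + z / 10 := by
  refine arsinh_le_of_le_exp (t := z + 1) (by linarith) (by nlinarith) ?_
  have h3 : 20 ≤ exp 3 :=
    le_exp_of_expTaylor (by norm_num) (by norm_num [expTaylor, Finset.sum_range_succ, factorial])
  calc z + (z + 1) = 20 * ((2 * z + 1) / 20 - 1 + 1) := by ring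
    _ ≤ exp 3 * exp ((2 * z + 1) / 20 - 1) :=
        mul_le_mul h3 (add_one_le_exp _) (by linarith) (exp_pos _).le
    _ = exp (2.05 + z / 10) := by rw [← exp_add]; ring_nf

lemma approxZero_fhk_of_four_le {g L : ℝ} (hg0 : 0 < g) (hg1 : g < 1)
    (hz : 4 ≤ L + 2.30 * g) :
    ApproxZero (fhk g L) (L + 2.30 * g) := by
  have h4 : (2.09 : ℝ) ≤ arsinh 4 := le_arsinh_of_exp_le (s := 4.1231) (by norm_num)
    (exp_le_of_expTaylor (by norm_num) (by norm_num)
      (by norm_num [expTaylor, Finset.sum_range_succ, factorial]))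
  have hlo := h4.trans (arsinh_le_arsinh.2 hz)
  have hhi := arsinh_le_add_div_ten (z := L + 2.30 * g) (by linarith)
  refine approxZero_fhk_of_abs_sub_arsinh_le hg0 hg1
    (D := max 0.21 (arsinh (L + 2.30 * g) - 2.30)) (s := L + 2.30 * g)
    ?_ (by linarith) (le_sqrt_of_sq_le (by nlinarith)) ?_
  · exact abs_le.2 ⟨by linarith [le_max_right (0.21 : ℝ) (arsinh (L + 2.30 * g) - 2.30)],
      by linarith [le_max_left (0.21 : ℝ) (arsinh (L + 2.30 * g) - 2.30)]⟩
  · rw [max_eq_right ((div_le_one (by linarith)).2 (by linarith)), mul_one,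
      div_le_iff₀ (by linarith)]
    exact max_le (by linarith) (by linarith)

/-- Corollary 2.6: for each pair `(a, [S_min, S_max])` in the table
`(0.91,[0.99,1.12])`, `(1.02,[1.12,1.32])`, `(1.16,[1.32,1.60])`, `(1.33,[1.59,2.01])`,
`(1.56,[2.00,2.74])`, `(1.90,[2.73,4.00])`, `(2.30,[4.00,∞))`, the starter
`S̃ = L + a·g` is an approximate zero of `f_{g,L}` whenever `g ∈ (0,1)` and
`S_min ≤ L + a·g ≤ S_max`. -/
theorem linear_starters_table (g L : ℝ) (hg0 : 0 < g) (hg1 : g < 1) :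
    (0.99 ≤ L + 0.91 * g → L + 0.91 * g ≤ 1.12 → ApproxZero (fhk g L) (L + 0.91 * g)) ∧
    (1.12 ≤ L + 1.02 * g → L + 1.02 * g ≤ 1.32 → ApproxZero (fhk g L) (L + 1.02 * g)) ∧
    (1.32 ≤ L + 1.16 * g → L + 1.16 * g ≤ 1.60 → ApproxZero (fhk g L) (L + 1.16 * g)) ∧
    (1.59 ≤ L + 1.33 * g → L + 1.33 * g ≤ 2.01 → ApproxZero (fhk g L) (L + 1.33 * g)) ∧
    (2.00 ≤ L + 1.56 * g → L + 1.56 * g ≤ 2.74 → ApproxZero (fhk g L) (L + 1.56 * g)) ∧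
    (2.73 ≤ L + 1.90 * g → L + 1.90 * g ≤ 4.00 → ApproxZero (fhk g L) (L + 1.90 * g)) ∧
    (4.00 ≤ L + 2.30 * g → ApproxZero (fhk g L) (L + 2.30 * g)) := by
  have row := fun {a u v lo hi s t : ℝ} (hc : StarterCertificate a u v lo hi s t) =>
    hc.approxZero (L := L) hg0 hg1
  refine ⟨row (lo := 0.874) (hi := 0.964) (s := 1.4071) (t := 1.5015) ?_,
    row (lo := 0.963) (hi := 1.091) (s := 1.5014) (t := 1.6561) ?_,
    row (lo := 1.090) (hi := 1.249) (s := 1.656) (t := 1.8868) ?_,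
    row (lo := 1.243) (hi := 1.449) (s := 1.8783) (t := 2.2451) ?_,
    row (lo := 1.443) (hi := 1.733) (s := 2.236) (t := 2.9168) ?_,
    row (lo := 1.729) (hi := 2.095) (s := 2.9073) (t := 4.1232) ?_,
    fun h => approxZero_fhk_of_four_le hg0 hg1 (by linarith)⟩
  all_goals norm_num [StarterCertificate, expTaylor, Finset.sum_range_succ, factorial, max_def]
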